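/- arXiv:2410.12560 — 6 statements merged into one kernel-verified Lean document; each statement's English description precedes it below -/
import Mathlib

section
/- Let p > 3 be a prime, n ≥ 1, and let σ ∈ GL_n(𝔽_p) be an element of order p whose minimal polynomial is (t-1)². Then for every matrix M ∈ M_n(𝔽_p), the norm N_σ(M) := M + σ·M + ⋯ + σ^{p-1}·M equals 0, where σ acts on M_n(𝔽_p) by conjugation: σ·M = σMσ^{-1}. -/
open Polynomial Finset

lemma sum_cast_sq_mul_six {R : Type*} [CommRing R] (m : ℕ) :
    (∑ k ∈ range m, (k : R) ^ 2) * 6 = (m : R) * ((m : R) - 1) * (2 * (m : R) - 1) := by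
  induction m with
  | zero => simp
  | succ m ih =>
    rw [Finset.sum_range_succ, add_mul, ih]
    push_cast
    ring

lemma sum_cast_mul_two {R : Type*} [CommRing R] (m : ℕ) :
    (∑ k ∈ range m, (k : R)) * 2 = (m : R) * ((m : R) - 1) := by
  induction m with
  | zero => simp
  | succ m ih =>
    rw [Finset.sum_range_succ, add_mul, ih]
    push_cast
    ring

open Polynomial in
/-- Let `p > 3` be a prime, `n ≥ 1`, and let `σ ∈ GL_n(𝔽_p)` be an element of order `p`
whose minimal polynomial is `(t-1)²`.  Then for every matrix `M ∈ M_n(𝔽_p)`, the norm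
`N_σ(M) = M + σ·M + ⋯ + σ^{p-1}·M` vanishes, where `σ` acts by conjugation. -/
theorem norm_conj_eq_zero (p n : ℕ) (hp : p.Prime) (hp3 : 3 < p) (hn : 1 ≤ n)
    (σ : (Matrix (Fin n) (Fin n) (ZMod p))ˣ)
    (hord : orderOf σ = p)
    (hmin : minpoly (ZMod p) ((σ : Matrix (Fin n) (Fin n) (ZMod p))) = (X - 1) ^ 2)
    (M : Matrix (Fin n) (Fin n) (ZMod p)) :
    ∑ k ∈ Finset.range p,
      ((σ ^ k : (Matrix (Fin n) (Fin n) (ZMod p))ˣ) : Matrix (Fin n) (Fin n) (ZMod p)) * M *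
        (((σ ^ k)⁻¹ : (Matrix (Fin n) (Fin n) (ZMod p))ˣ) : Matrix (Fin n) (Fin n) (ZMod p))
      = 0 := by
  haveI : Fact p.Prime := ⟨hp⟩
  let A := Matrix (Fin n) (Fin n) (ZMod p)
  set s : A := (σ : A) with hs
  set N : A := s - 1 with hNdef
  -- N² = 0
  have haev := minpoly.aeval (ZMod p) s
  rw [hmin] at haev
  have hN2 : N * N = 0 := by
    have : (s - 1) ^ 2 = 0 := by
      simpa [map_pow, map_sub] using haev
    simpa [pow_two] using this
  -- σ^k = 1 + k • N
  have key1 : ∀ k : ℕ, ((σ ^ k : Aˣ) : A) = 1 + (k : ZMod p) • N := by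
    intro k
    induction k with
    | zero => simp
    | succ k ih =>
      have : ((σ ^ (k+1) : Aˣ) : A) = ((σ ^ k : Aˣ) : A) * s := by
        push_cast [pow_succ]
        rfl
      rw [this, ih]
      have hsN : s = 1 + N := by rw [hNdef, add_sub_cancel]
      rw [hsN]
      push_cast
      simp only [add_mul, mul_add, one_mul, mul_one, smul_mul_assoc, hN2, smul_zero,
        add_smul, one_smul]
      abel
  have key2 : ∀ k : ℕ, (((σ ^ k)⁻¹ : Aˣ) : A) = 1 - (k : ZMod p) • N := by
    intro k
    have hmul : ((σ ^ k : Aˣ) : A) * (1 - (k : ZMod p) • N) = 1 := by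
      rw [key1]
      simp only [add_mul, mul_sub, one_mul, mul_one, smul_mul_assoc, mul_smul_comm,
        smul_smul, hN2, smul_zero, sub_zero]
      simp
    calc (((σ ^ k)⁻¹ : Aˣ) : A)
        = (((σ ^ k)⁻¹ : Aˣ) : A) * (((σ ^ k : Aˣ) : A) * (1 - (k : ZMod p) • N)) := by
          rw [hmul, mul_one]
      _ = 1 - (k : ZMod p) • N := by
          rw [← mul_assoc, ← Units.val_mul, inv_mul_cancel]
          simp
  -- each summand
  have term : ∀ k : ℕ,
      ((σ ^ k : Aˣ) : A) * M * (((σ ^ k)⁻¹ : Aˣ) : A)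
        = M + (k : ZMod p) • (N * M - M * N) - ((k : ZMod p))^2 • (N * M * N) := by
    intro k
    rw [key1, key2]
    simp only [add_mul, sub_mul, mul_sub, mul_add, one_mul, mul_one, smul_mul_assoc,
      mul_smul_comm, smul_smul, smul_sub, smul_add, pow_two]
    abel
  simp only [term]
  rw [Finset.sum_sub_distrib, Finset.sum_add_distrib, ← Finset.sum_smul, ← Finset.sum_smul]
  have h2 : (2 : ZMod p) ≠ 0 := by
    have : ((2:ℕ) : ZMod p) ≠ 0 := by
      rw [Ne, ZMod.natCast_eq_zero_iff]
      intro h; have := Nat.le_of_dvd (by norm_num) h; omega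
    simpa using this
  have h3 : (3 : ZMod p) ≠ 0 := by
    have : ((3:ℕ) : ZMod p) ≠ 0 := by
      rw [Ne, ZMod.natCast_eq_zero_iff]
      intro h; have := Nat.le_of_dvd (by norm_num) h; omega
    simpa using this
  have hp0 : ((p : ℕ) : ZMod p) = 0 := ZMod.natCast_self p
  have hsum1 : (∑ k ∈ range p, (k : ZMod p)) = 0 := by
    have := sum_cast_mul_two (R := ZMod p) p
    rw [hp0] at this
    simp at this
    rcases this with h | h
    · exact h
    · exact absurd h h2
  have hsum2 : (∑ k ∈ range p, (k : ZMod p) ^ 2) = 0 := by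
    have := sum_cast_sq_mul_six (R := ZMod p) p
    rw [hp0] at this
    simp at this
    have h6 : (6 : ZMod p) ≠ 0 := by
      have : (6 : ZMod p) = 2 * 3 := by norm_num
      rw [this]
      exact mul_ne_zero h2 h3
    rcases this with h | h
    · exact h
    · exact absurd h h6
  have hsumM : (∑ _k ∈ range p, M) = 0 := by
    rw [Finset.sum_const, Finset.card_range, ← Nat.cast_smul_eq_nsmul (ZMod p), hp0,
      zero_smul]
  rw [hsumM, hsum1, hsum2, zero_smul, zero_smul]
  simp
end

section
/- Let p > 3 be a prime, n ≥ 1, and let σ ∈ GL_n(𝔽_p) be an element of order p whose minimal polynomial is (t-1)². Then there is no element τ ∈ GL_n(ℤ/p²ℤ) of order p whose reduction modulo p equals σ. -/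
/-!
Write a lift of `σ` as `τ = 1 + M`. Since `(σ - 1)² = 0`, the matrix `M²` is divisible by `p`,
so `p M² = 0` and `M⁴ = 0` over `ℤ/p²`. In the binomial expansion of `(1 + M)ᵖ` every term with
`2 ≤ k < p` carries a factor `p M²` (as `p ∣ C(p, k)`), and every term with `k ≥ p ≥ 4` a factor
`M⁴`; hence `τᵖ = 1 + p M`. So `τᵖ = 1` forces `p M = 0`, i.e. `M ≡ 0 mod p` and `σ = 1`,
which does not have order `p`.
-/

theorem one_add_pow_prime_eq_of_sq_eq_nsmul {A : Type*} [Ring A] {p : ℕ} (hp : p.Prime)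
    (hp3 : 3 < p) (hp2 : (p : A) ^ 2 = 0) {x y : A} (hx : x ^ 2 = p • y) :
    (1 + x) ^ p = 1 + p • x := by
  have hpx2 : (p : A) * x ^ 2 = 0 := by rw [hx, nsmul_eq_mul, ← mul_assoc, ← sq, hp2, zero_mul]
  have hx4 : x ^ 4 = 0 := by
    rw [show x ^ 4 = x ^ 2 * x ^ 2 by rw [← pow_add]]
    nth_rw 2 [hx]
    rw [nsmul_eq_mul, ← mul_assoc, ← (Nat.cast_commute p (x ^ 2)).eq, hpx2, zero_mul]
  have hterm : ∀ k, 2 ≤ k → x ^ k * (p.choose k : A) = 0 := by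
    intro k hk
    by_cases hkp : k < p
    · obtain ⟨c, hc⟩ := hp.dvd_choose_self (by omega) hkp
      rw [hc, Nat.cast_mul, ← pow_sub_mul_pow x hk, mul_assoc, ← mul_assoc (x ^ 2),
        ← (Nat.cast_commute p (x ^ 2)).eq, hpx2, zero_mul, mul_zero]
    · rw [← pow_sub_mul_pow x (show 4 ≤ k by omega), hx4, mul_zero, zero_mul]
  rw [add_comm, (Commute.one_right x).add_pow,
    Finset.sum_eq_add_of_mem 0 1 (by simp) (by simp [hp.pos]) zero_ne_one]
  · simp [nsmul_eq_mul, (Nat.cast_commute p x).eq]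
  · rintro k - ⟨hk0, hk1⟩
    rw [one_pow, mul_one, hterm k (by omega)]

theorem ZMod.exists_eq_nsmul_of_castHom_eq_zero {m p : ℕ} (h : p ∣ m) {a : ZMod m}
    (ha : ZMod.castHom h (ZMod p) a = 0) : ∃ b : ZMod m, a = p • b := by
  obtain ⟨z, rfl⟩ := ZMod.intCast_surjective a
  rw [map_intCast, ZMod.intCast_zmod_eq_zero_iff_dvd] at ha
  obtain ⟨c, rfl⟩ := ha
  exact ⟨c, by push_cast [nsmul_eq_mul]; rfl⟩

theorem ZMod.castHom_eq_zero_of_nsmul_eq_zero {p : ℕ} (hp : p ≠ 0) {a : ZMod (p ^ 2)}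
    (ha : p • a = 0) : ZMod.castHom (dvd_pow_self p two_ne_zero) (ZMod p) a = 0 := by
  obtain ⟨z, rfl⟩ := ZMod.intCast_surjective a
  rw [nsmul_eq_mul, ← Int.cast_natCast, ← Int.cast_mul, ZMod.intCast_zmod_eq_zero_iff_dvd,
    Nat.cast_pow, sq, mul_dvd_mul_iff_left (by exact_mod_cast hp)] at ha
  rwa [map_intCast, ZMod.intCast_zmod_eq_zero_iff_dvd]

namespace Matrix

variable {ι : Type*}

theorem exists_eq_nsmul_of_map_castHom_eq_zero {m p : ℕ} (h : p ∣ m)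
    {N : Matrix ι ι (ZMod m)} (hN : N.map (ZMod.castHom h (ZMod p)) = 0) :
    ∃ B : Matrix ι ι (ZMod m), N = p • B := by
  choose b hb using fun i j ↦
    ZMod.exists_eq_nsmul_of_castHom_eq_zero h (congrFun (congrFun hN i) j)
  exact ⟨of b, by ext i j; simp [hb]⟩

theorem map_castHom_eq_zero_of_nsmul_eq_zero {p : ℕ} (hp : p ≠ 0)
    {N : Matrix ι ι (ZMod (p ^ 2))} (hN : p • N = 0) :
    N.map (ZMod.castHom (dvd_pow_self p two_ne_zero) (ZMod p)) = 0 := by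
  ext i j
  exact ZMod.castHom_eq_zero_of_nsmul_eq_zero hp (congrFun (congrFun hN i) j)

theorem map_castHom_eq_one_of_pow_eq_one [Fintype ι] [DecidableEq ι] {p : ℕ} (hp : p.Prime)
    (hp3 : 3 < p) {T : Matrix ι ι (ZMod (p ^ 2))} (hT : T ^ p = 1)
    (hsq : (T.map (ZMod.castHom (dvd_pow_self p two_ne_zero) (ZMod p)) - 1) ^ 2 = 0) :
    T.map (ZMod.castHom (dvd_pow_self p two_ne_zero) (ZMod p)) = 1 := by
  set π := RingHom.mapMatrix (m := ι) (ZMod.castHom (dvd_pow_self p two_ne_zero) (ZMod p))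
  set M := T - 1
  have hπM : π M = T.map (ZMod.castHom (dvd_pow_self p two_ne_zero) (ZMod p)) - 1 := by
    simp only [M, map_sub, map_one]
    rfl
  obtain ⟨B, hB⟩ := exists_eq_nsmul_of_map_castHom_eq_zero (dvd_pow_self p two_ne_zero)
    (show π (M ^ 2) = 0 by rw [map_pow, hπM, hsq])
  have hp2 : (p : Matrix ι ι (ZMod (p ^ 2))) ^ 2 = 0 := by
    rw [← Nat.cast_pow, ← diagonal_natCast, ZMod.natCast_self, diagonal_zero]
  have hpM : p • M = 0 := by
    have := one_add_pow_prime_eq_of_sq_eq_nsmul hp hp3 hp2 hB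
    rwa [add_sub_cancel, hT, left_eq_add] at this
  rw [← sub_eq_zero, ← hπM]
  exact map_castHom_eq_zero_of_nsmul_eq_zero hp.ne_zero hpM

end Matrix

open Polynomial in
theorem no_order_p_lift_general (p n : ℕ) (hp : p.Prime) (hp3 : 3 < p)
    (σ : (Matrix (Fin n) (Fin n) (ZMod p))ˣ)
    (hord : orderOf σ = p)
    (hmin : minpoly (ZMod p) ((σ : Matrix (Fin n) (Fin n) (ZMod p))) = (X - 1) ^ 2) :
    ¬ ∃ τ : (Matrix (Fin n) (Fin n) (ZMod (p ^ 2)))ˣ,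
        orderOf τ = p ∧
        Units.map (RingHom.mapMatrix
            (ZMod.castHom (dvd_pow_self p two_ne_zero) (ZMod p))).toMonoidHom τ = σ := by
  rintro ⟨τ, hτord, hred⟩
  have hσ : (σ : Matrix (Fin n) (Fin n) (ZMod p)) =
      (τ : Matrix (Fin n) (Fin n) (ZMod (p ^ 2))).map
        (ZMod.castHom (dvd_pow_self p two_ne_zero) (ZMod p)) := by
    rw [← hred]
    rfl
  have hsq : ((σ : Matrix (Fin n) (Fin n) (ZMod p)) - 1) ^ 2 = 0 := by
    simpa [hmin] using minpoly.aeval (ZMod p) (σ : Matrix (Fin n) (Fin n) (ZMod p))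
  have hτp : (τ : Matrix (Fin n) (Fin n) (ZMod (p ^ 2))) ^ p = 1 := by
    rw [← Units.val_pow_eq_pow_val, orderOf_dvd_iff_pow_eq_one.mp hτord.dvd, Units.val_one]
  have hσ1 : σ = 1 :=
    Units.ext (hσ.trans (Matrix.map_castHom_eq_one_of_pow_eq_one hp hp3 hτp (hσ ▸ hsq)))
  rw [hσ1, orderOf_one] at hord
  exact hp.one_lt.ne hord

open Polynomial in
/-- Let `p > 3` be a prime, `n ≥ 1`, and let `σ ∈ GL_n(𝔽_p)` be an element of order `p`
whose minimal polynomial is `(t-1)²`.  Then `σ` does not lift to an element of order `p`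
in `GL_n(ℤ/p²ℤ)` along entrywise reduction modulo `p`. -/
theorem no_order_p_lift (p n : ℕ) (hp : p.Prime) (hp3 : 3 < p) (hn : 1 ≤ n)
    (σ : (Matrix (Fin n) (Fin n) (ZMod p))ˣ)
    (hord : orderOf σ = p)
    (hmin : minpoly (ZMod p) ((σ : Matrix (Fin n) (Fin n) (ZMod p))) = (X - 1) ^ 2) :
    ¬ ∃ τ : (Matrix (Fin n) (Fin n) (ZMod (p ^ 2)))ˣ,
        orderOf τ = p ∧
        Units.map (RingHom.mapMatrix
            (ZMod.castHom (dvd_pow_self p two_ne_zero) (ZMod p))).toMonoidHom τ = σ :=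
  no_order_p_lift_general p n hp hp3 σ hord hmin
end

section
/- There do not exist elements σ, τ ∈ GL_3(ℤ/9ℤ) with σ³ = τ³ = 1 and στ = τσ, such that σ reduces modulo 3 to I + E_{12} and τ reduces modulo 3 to I + E_{13} in GL_3(𝔽_3). -/
/-!
Write `σ = 1 + E₁₂ + 3A` and `τ = 1 + E₁₃ + 3B`. As `9 = 0`, the `(2,3)` entry of `στ - τσ`
is `3 A₂₁`, so commutation forces `3 A₂₁ = 0`. As `E₁₂² = 0` and `9 = 0`, the binomial expansion
collapses to `σ³ = 1 + 3 E₁₂ + 3 E₁₂ A E₁₂`, whose `(1,2)` entry `3 (1 + A₂₁)` must vanish.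
Together these give `3 = 0` in `ℤ/9ℤ`.
-/

open Matrix

theorem ZMod.exists_eq_mul_of_castHom_eq_zero {m n : ℕ} [NeZero n] (h : m ∣ n) {x : ZMod n}
    (hx : castHom h (ZMod m) x = 0) : ∃ c, x = m * c := by
  rw [castHom_apply, ← natCast_zmod_val x, cast_natCast h, natCast_eq_zero_iff] at hx
  obtain ⟨c, hc⟩ := hx
  exact ⟨c, by rw [← natCast_zmod_val x, hc, Nat.cast_mul]⟩

section Ring

variable {S : Type*} [Ring S]

theorem three_mul_cross_terms_eq_zero_of_commute (h9 : (9 : S) = 0) {e f a b : S}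
    (hef : e * f = 0) (hfe : f * e = 0) (h : Commute (1 + e + 3 * a) (1 + f + 3 * b)) :
    3 * (e * b + a * f - f * a - b * e) = 0 :=
  calc 3 * (e * b + a * f - f * a - b * e)
      = ((1 + e + 3 * a) * (1 + f + 3 * b) - (1 + f + 3 * b) * (1 + e + 3 * a))
          - e * f + f * e - 9 * (a * b - b * a) := by noncomm_ring
    _ = 0 := by rw [h.eq, hef, hfe, h9]; simp

theorem one_add_add_three_mul_pow_three (h9 : (9 : S) = 0) {e a : S} (he : e * e = 0) :
    (1 + e + 3 * a) ^ 3 = 1 + 3 * e + 3 * (e * a * e) :=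
  calc (1 + e + 3 * a) ^ 3
      = 1 + 3 * e + 3 * (e * a * e) + (3 + e + 3 * a) * (e * e) + 3 * (e * e) * a
          + 9 * (a + e * a + a * e + 3 * a * a + e * a * a + a * e * a + a * a * e
            + 3 * a * a * a) := by noncomm_ring
    _ = 1 + 3 * e + 3 * (e * a * e) := by rw [he, h9]; simp

end Ring

namespace Matrix

variable {n R : Type*} [DecidableEq n] [Ring R]

theorem ofNat_eq_zero_of_eq_zero {d : ℕ} [d.AtLeastTwo] (h : (ofNat(d) : R) = 0) :
    (ofNat(d) : Matrix n n R) = 0 := by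
  rw [← diagonal_ofNat, h, diagonal_zero]

variable [Fintype n]

theorem ofNat_mul_apply (d : ℕ) [d.AtLeastTwo] (A : Matrix n n R) (i j : n) :
    ((ofNat(d) : Matrix n n R) * A) i j = ofNat(d) * A i j := by
  rw [← diagonal_ofNat, diagonal_mul]

theorem three_mul_apply_eq_zero_of_commute (h9 : (9 : R) = 0) {i j k : n}
    (hij : i ≠ j) (hik : i ≠ k) (hjk : j ≠ k) {A B : Matrix n n R}
    (h : Commute (1 + single i j 1 + 3 * A) (1 + single i k 1 + 3 * B)) :
    3 * A j i = 0 := by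
  have h_cross := three_mul_cross_terms_eq_zero_of_commute (S := Matrix n n R)
    (ofNat_eq_zero_of_eq_zero h9) (by simp [hij.symm]) (by simp [hik.symm]) h
  simpa [ofNat_mul_apply, sub_apply, hij.symm, hjk.symm] using congrFun (congrFun h_cross j) k

theorem three_mul_one_add_apply_eq_zero_of_pow_three_eq_one (h9 : (9 : R) = 0) {i j : n}
    (hij : i ≠ j) {A : Matrix n n R} (h : (1 + single i j 1 + 3 * A) ^ 3 = 1) :
    3 * (1 + A j i) = 0 := by
  rw [one_add_add_three_mul_pow_three (ofNat_eq_zero_of_eq_zero h9) (by simp [hij.symm]),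
    add_assoc, add_eq_left] at h
  simpa [ofNat_mul_apply, mul_add] using congrFun (congrFun h i) j

end Matrix

theorem Matrix.exists_eq_add_mul_of_map_castHom_eq {ι : Type*} [Fintype ι] [DecidableEq ι]
    {m n : ℕ} [NeZero n] (h : m ∣ n) {M K : Matrix ι ι (ZMod n)}
    (hMK : M.map (ZMod.castHom h (ZMod m)) = K.map (ZMod.castHom h (ZMod m))) :
    ∃ A : Matrix ι ι (ZMod n), M = K + (m : Matrix ι ι (ZMod n)) * A := by
  have hker : ∀ i j, ∃ c, M i j - K i j = m * c := fun i j =>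
    ZMod.exists_eq_mul_of_castHom_eq_zero h <| by
      rw [map_sub, sub_eq_zero]; exact congrFun (congrFun hMK i) j
  choose A hA using hker
  refine ⟨of A, ?_⟩
  rw [← nsmul_eq_mul]
  ext i j
  simp [← hA]

theorem Matrix.exists_eq_one_add_single_add_mul_of_map_castHom_eq {ι : Type*} [Fintype ι]
    [DecidableEq ι] {m n : ℕ} [NeZero n] (h : m ∣ n) {M : Matrix ι ι (ZMod n)} {i j : ι}
    (hM : M.map (ZMod.castHom h (ZMod m)) = 1 + single i j 1) :
    ∃ A : Matrix ι ι (ZMod n), M = 1 + single i j 1 + (m : Matrix ι ι (ZMod n)) * A :=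
  exists_eq_add_mul_of_map_castHom_eq h <| by
    rw [hM, Matrix.map_add (hf := map_add _), Matrix.map_one _ (map_zero _) (map_one _),
      map_single, map_one]

/-- There do not exist commuting elements `σ, τ ∈ GL_3(ℤ/9ℤ)` with `σ³ = τ³ = 1`
such that `σ` reduces modulo `3` to `I + E₁₂` and `τ` reduces modulo `3` to `I + E₁₃`. -/
theorem no_lift_of_N_mod_nine :
    ¬ ∃ (σ τ : (Matrix (Fin 3) (Fin 3) (ZMod 9))ˣ),
        σ ^ 3 = 1 ∧ τ ^ 3 = 1 ∧ σ * τ = τ * σ ∧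
        ((σ : Matrix (Fin 3) (Fin 3) (ZMod 9)).map
            (ZMod.castHom (show 3 ∣ 9 by norm_num) (ZMod 3))
          = 1 + Matrix.single 0 1 1) ∧
        ((τ : Matrix (Fin 3) (Fin 3) (ZMod 9)).map
            (ZMod.castHom (show 3 ∣ 9 by norm_num) (ZMod 3))
          = 1 + Matrix.single 0 2 1) := by
  rintro ⟨σ, τ, hσ_cube, -, hστ, hσ, hτ⟩
  have h9 : (9 : ZMod 9) = 0 := rfl
  obtain ⟨A, hA⟩ := exists_eq_one_add_single_add_mul_of_map_castHom_eq _ hσ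
  obtain ⟨B, hB⟩ := exists_eq_one_add_single_add_mul_of_map_castHom_eq _ hτ
  rw [Nat.cast_ofNat] at hA hB
  have hcomm : 3 * A 1 0 = 0 := three_mul_apply_eq_zero_of_commute h9
    (by decide) (by decide) (by decide) (hA ▸ hB ▸ Commute.units_val hστ)
  have hcube : 3 * (1 + A 1 0) = 0 :=
    three_mul_one_add_apply_eq_zero_of_pow_three_eq_one h9 (by decide)
      (by rw [← hA, ← Units.val_pow_eq_pow_val, hσ_cube, Units.val_one])
  exact absurd (by linear_combination hcube - hcomm : (3 : ZMod 9) = 0) (by decide)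
end

section
/- Let H be a finite group and let 0 → X → Y → Z → 0 be a short exact sequence of abelian groups regarded as trivial H-modules. Then the image of the connecting map ∂ : H¹(H, Z) → H²(H, X) is contained in the image of the cup product map H²(H, ℤ) ⊗ X → H²(H, X). -/
/-- A `2`-cocycle of the group `H` with values in the trivial `H`-module `M`. -/
def IsTrivTwoCocycle {H M : Type} [Group H] [AddCommGroup M] (c : H → H → M) : Prop :=
  ∀ g h k : H, c h k - c (g * h) k + c g (h * k) - c g h = 0

/-- Let `H` be a finite group and `0 → X → Y → Z → 0` a short exact sequence of abelian
groups regarded as trivial `H`-modules.  Then the image of the connecting map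
`∂ : H¹(H,Z) → H²(H,X)` is contained in the image of the cup product map
`H²(H,ℤ) ⊗ X → H²(H,X)`: for any homomorphism `χ : H → Z` (a `1`-cocycle for the trivial
action) and any set-theoretic section `s` of `Y → Z`, the connecting `2`-cocycle
`(g,h) ↦ s(χ g) + s(χ h) - s(χ(gh))` (with values in `X`) differs by a `2`-coboundary
from a finite sum of cup products `cₖ ∪ xₖ` of integral `2`-cocycles `cₖ` with elements
`xₖ ∈ X`. -/
theorem connecting_image_subset_cup_image
    (H : Type) [Group H] [Finite H]
    (X Y Z : Type) [AddCommGroup X] [AddCommGroup Y] [AddCommGroup Z]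
    (i : X →+ Y) (π : Y →+ Z) (hi : Function.Injective i) (hπ : Function.Surjective π)
    (hexact : ∀ y : Y, π y = 0 ↔ y ∈ Set.range i)
    (s : Z → Y) (hs : ∀ z, π (s z) = z)
    (χ : H →* Multiplicative Z)
    (d : H → H → X)
    (hd : ∀ g h : H, i (d g h)
        = s (Multiplicative.toAdd (χ g)) + s (Multiplicative.toAdd (χ h))
          - s (Multiplicative.toAdd (χ (g * h)))) :
    ∃ (ι : Type) (_ : Fintype ι) (c : ι → H → H → ℤ) (x : ι → X) (u : H → X),
      (∀ k : ι, IsTrivTwoCocycle (c k)) ∧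
      ∀ g h : H, d g h = (∑ k, c k g h • x k) + (u g + u h - u (g * h)) := by
  classical
  have : Fintype H := Fintype.ofFinite H
  -- the map `(H →₀ ℤ) → Z`, `single g 1 ↦ χ g`
  let p : (H →₀ ℤ) →ₗ[ℤ] Z :=
    Finsupp.linearCombination ℤ (fun g => Multiplicative.toAdd (χ g))
  let K : Submodule ℤ (H →₀ ℤ) := LinearMap.ker p
  obtain ⟨n, b⟩ := K.basisOfPid (Finsupp.basisSingleOne (R := ℤ) (ι := H))
  -- the connecting element, as an element of `K`
  have hχ : ∀ g h : H, Multiplicative.toAdd (χ (g * h))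
      = Multiplicative.toAdd (χ g) + Multiplicative.toAdd (χ h) := by
    intro g h
    rw [χ.map_mul g h]
    rfl
  have hC : ∀ g h : H,
      (Finsupp.single g 1 + Finsupp.single h 1 - Finsupp.single (g * h) 1 : H →₀ ℤ) ∈ K := by
    intro g h
    have : p (Finsupp.single g 1 + Finsupp.single h 1 - Finsupp.single (g * h) 1) = 0 := by
      rw [map_sub, map_add]
      have e1 : ∀ k : H, p (Finsupp.single k 1) = Multiplicative.toAdd (χ k) := by
        intro k
        simp [p, Finsupp.linearCombination_single]
      rw [e1, e1, e1, hχ g h]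
      abel
    exact this
  let C : H → H → K := fun g h =>
    ⟨Finsupp.single g 1 + Finsupp.single h 1 - Finsupp.single (g * h) 1, hC g h⟩
  -- cocycle identity for `C`
  have hCcoc : ∀ g h k : H, C h k - C (g * h) k + C g (h * k) - C g h = 0 := by
    intro g h k
    apply Subtype.ext
    show (Finsupp.single h 1 + Finsupp.single k 1 - Finsupp.single (h * k) 1 : H →₀ ℤ)
        - (Finsupp.single (g * h) 1 + Finsupp.single k 1 - Finsupp.single (g * h * k) 1)
        + (Finsupp.single g 1 + Finsupp.single (h * k) 1 - Finsupp.single (g * (h * k)) 1)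
        - (Finsupp.single g 1 + Finsupp.single h 1 - Finsupp.single (g * h) 1) = 0
    rw [mul_assoc]
    abel
  -- the integral 2-cocycles: coordinates of `C` in the basis `b`
  let c : Fin n → H → H → ℤ := fun j g h => b.repr (C g h) j
  -- the map `(H →₀ ℤ) → Y`, `single g 1 ↦ s (χ g)`
  let ψ : (H →₀ ℤ) →ₗ[ℤ] Y :=
    Finsupp.linearCombination ℤ (fun g => s (Multiplicative.toAdd (χ g)))
  have hψsingle : ∀ k : H, ψ (Finsupp.single k 1) = s (Multiplicative.toAdd (χ k)) := by
    intro k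
    simp [ψ, Finsupp.linearCombination_single]
  -- `ψ` maps `K` into the range of `i`
  have hψK : ∀ f : H →₀ ℤ, f ∈ K → ψ f ∈ Set.range i := by
    intro f hf
    rw [← hexact]
    have hcomp : π.toIntLinearMap ∘ₗ ψ = p := by
      apply Finsupp.lhom_ext'
      intro g
      ext
      simp [ψ, p, Finsupp.linearCombination_single, hs]
    have h0 : π (ψ f) = p f := congrArg (fun q : (H →₀ ℤ) →ₗ[ℤ] Z => q f) hcomp
    rw [h0]
    exact hf
  choose xfun hx using fun j => hψK (b j) (b j).2
  refine ⟨Fin n, inferInstance, c, xfun, 0, ?_, ?_⟩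
  · intro j g h₁ k
    have hz : b.repr.toLinearMap (C h₁ k) - b.repr.toLinearMap (C (g * h₁) k)
        + b.repr.toLinearMap (C g (h₁ * k)) - b.repr.toLinearMap (C g h₁) = 0 := by
      rw [← map_sub b.repr.toLinearMap, ← map_add b.repr.toLinearMap,
        ← map_sub b.repr.toLinearMap, hCcoc g h₁ k, map_zero]
    have := congrArg (fun q : Fin n →₀ ℤ => q j) hz
    simpa [c] using this
  · intro g h
    have key : d g h = ∑ j, c j g h • xfun j := by
      apply hi
      have h1 : i (∑ j, c j g h • xfun j) = ψ (C g h : H →₀ ℤ) := by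
        rw [map_sum]
        have hrep : ((C g h : K) : H →₀ ℤ) = ∑ j, c j g h • ((b j : K) : H →₀ ℤ) := by
          conv_lhs => rw [← b.sum_repr (C g h)]
          push_cast
          rfl
        rw [hrep, map_sum]
        refine Finset.sum_congr rfl fun j _ => ?_
        rw [map_zsmul, map_zsmul, hx j]
      rw [h1]
      show _ = ψ (Finsupp.single g 1 + Finsupp.single h 1 - Finsupp.single (g * h) 1)
      rw [map_sub, map_add, hψsingle, hψsingle, hψsingle, hd g h]
    rw [key]
    simp
end

section
/- Let m, n ≥ 1 be integers and let F be a field containing a primitive root of unity of order mn. Then for every field extension K/F, every continuous homomorphism from the absolute Galois group Γ_K to ℤ/mℤ lifts through the reduction map ℤ/mnℤ → ℤ/mℤ to a continuous homomorphism Γ_K → ℤ/mnℤ. -/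
/-!
Kummer theory. Composing `f` with `k ↦ ζ ^ (n k)` gives a character of `Γ_K` with values in
the `m`-th roots of unity of `K` and with open kernel. By Hilbert 90 for the finite Galois
extension cut out by that kernel, it is `σ ↦ σ β / β` for some `β ≠ 0`. For an `n`-th root `γ`
of `β`, the ratio `σ γ / γ` is an `mn`-th root of unity `ζ ^ (g σ)`; this `g` is a continuous
character, and `ζ ^ (n g σ) = σ β / β` says exactly that `g` reduces to `f` modulo `m`.
-/

open Multiplicative
open scoped IntermediateField

theorem MonoidHom.continuous_of_le_ker {G H : Type*} [Group G] [TopologicalSpace G]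
    [IsTopologicalGroup G] [Group H] [TopologicalSpace H] [DiscreteTopology H] (φ : G →* H)
    {U : Subgroup G} (hU : IsOpen (U : Set G)) (hUφ : U ≤ φ.ker) : Continuous φ := by
  refine continuous_of_continuousAt_one φ ?_
  rw [ContinuousAt, nhds_discrete H, map_one, Filter.tendsto_pure]
  exact Filter.mem_of_superset (hU.mem_nhds U.one_mem) hUφ

namespace IsPrimitiveRoot

variable {K : Type*} [Field K] {ζ : K} {N : ℕ} [NeZero N]

theorem mem_zpowers_toRootsOfUnity (h : IsPrimitiveRoot ζ N) (x : rootsOfUnity N K) :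
    x ∈ Subgroup.zpowers h.toRootsOfUnity := by
  have hprim : IsPrimitiveRoot h.toRootsOfUnity N := by
    rw [← coe_submonoidClass_iff, ← coe_units_iff, val_toRootsOfUnity_coe]
    exact h
  rw [Subgroup.eq_top_of_card_eq (Subgroup.zpowers h.toRootsOfUnity)
    (by rw [Nat.card_zpowers, ← hprim.eq_orderOf, h.card_rootsOfUnity])]
  exact Subgroup.mem_top x

/-- `ofAdd k ↦ ζ ^ k`. -/
noncomputable def zmodPowHom (h : IsPrimitiveRoot ζ N) : Multiplicative (ZMod N) →* Kˣ :=
  (rootsOfUnity N K).subtype.comp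
    (zmodMulEquivOfGenerator h.mem_zpowers_toRootsOfUnity h.card_rootsOfUnity).toMonoidHom

theorem zmodPowHom_injective (h : IsPrimitiveRoot ζ N) : Function.Injective h.zmodPowHom :=
  Subtype.val_injective.comp (MulEquiv.injective _)

theorem zmodPowHom_mem_rootsOfUnity (h : IsPrimitiveRoot ζ N) (k : Multiplicative (ZMod N)) :
    h.zmodPowHom k ∈ rootsOfUnity N K :=
  SetLike.coe_mem _

theorem zmodPowHom_ofAdd_intCast (h : IsPrimitiveRoot ζ N) (i : ℤ) :
    (h.zmodPowHom (ofAdd (i : ZMod N)) : K) = ζ ^ i := by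
  simp [zmodPowHom]

theorem zmodPowHom_ofAdd_natCast (h : IsPrimitiveRoot ζ N) (i : ℕ) :
    (h.zmodPowHom (ofAdd (i : ZMod N)) : K) = ζ ^ i := by
  simpa using h.zmodPowHom_ofAdd_intCast i

theorem zmodPowHom_castHom {m n : ℕ} [NeZero m] [NeZero n] (h : IsPrimitiveRoot ζ (m * n))
    (hω : IsPrimitiveRoot (ζ ^ n) m) (k : Multiplicative (ZMod (m * n))) :
    (hω.zmodPowHom (ofAdd (ZMod.castHom (dvd_mul_right m n) (ZMod m) (toAdd k))) : K) =
      (h.zmodPowHom k : K) ^ n := by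
  obtain ⟨i, hi⟩ := ZMod.intCast_surjective (toAdd k)
  rw [← ofAdd_toAdd k, ← hi, toAdd_ofAdd, map_intCast, hω.zmodPowHom_ofAdd_intCast,
    h.zmodPowHom_ofAdd_intCast, ← zpow_natCast, ← zpow_mul, ← zpow_natCast, ← zpow_mul,
    mul_comm]

end IsPrimitiveRoot

section

variable {K L : Type*} [Field K] [Field L] [Algebra K L]

theorem exists_eigenvector_of_finiteDimensional [FiniteDimensional K L] (χ : Gal(L/K) →* Kˣ) :
    ∃ β : L, β ≠ 0 ∧ ∀ τ : Gal(L/K), τ β = algebraMap K L (χ τ) * β := by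
  obtain ⟨β, hβ⟩ := groupCohomology.isMulCoboundary₁_of_isMulCocycle₁_of_aut_to_units
    (fun τ => Units.map (algebraMap K L) (χ τ)) fun τ ρ => by
      ext
      simp [mul_comm]
  refine ⟨β, β.ne_zero, fun τ => ?_⟩
  have := congrArg Units.val (hβ τ)
  simp only [AlgEquiv.smul_units_def, Units.val_div_eq_div_val, Units.coe_map,
    MonoidHom.coe_coe] at this
  rw [← this, div_mul_cancel₀ _ β.ne_zero]

/-- Hilbert 90 for a character of the profinite group `Gal(L/K)`: it factors through the
Galois group of the finite extension fixed by its kernel. -/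
theorem exists_eigenvector_of_isOpen_ker [IsGalois K L] (χ : Gal(L/K) →* Kˣ)
    (hχ : IsOpen (χ.ker : Set Gal(L/K))) :
    ∃ β : L, β ≠ 0 ∧ ∀ σ : Gal(L/K), σ β = algebraMap K L (χ σ) * β := by
  let H : ClosedSubgroup Gal(L/K) := ⟨χ.ker, Subgroup.isClosed_of_isOpen _ hχ⟩
  let E := IntermediateField.fixedField H.1
  have hE : E.fixingSubgroup = χ.ker := InfiniteGalois.fixingSubgroup_fixedField H
  have : FiniteDimensional K E := (InfiniteGalois.isOpen_iff_finite E).mp (hE ▸ hχ)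
  have : IsGalois K E := (InfiniteGalois.normal_iff_isGalois E).mp (hE ▸ χ.normal_ker)
  let res : Gal(L/K) →* Gal(E/K) := AlgEquiv.restrictNormalHom E
  have hres : Function.Surjective res := AlgEquiv.restrictNormalHom_surjective L
  let χE := res.liftOfRightInverse _ (Function.rightInverse_surjInv hres)
    ⟨χ, (E.restrictNormalHom_ker.trans hE).le⟩
  obtain ⟨β, hβ0, hβ⟩ := exists_eigenvector_of_finiteDimensional χE
  refine ⟨β, by simpa using hβ0, fun σ => ?_⟩
  have := congrArg ((↑) : E → L) (hβ (res σ))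
  rwa [MonoidHom.liftOfRightInverse_comp_apply, AlgEquiv.restrictNormalHom_apply] at this

theorem continuous_of_apply_eq_algebraMap_mul {G : Type*} [Group G] [TopologicalSpace G]
    [DiscreteTopology G] (ψ : G →* Kˣ) (hψ : Function.Injective ψ) (φ : Gal(L/K) →* G)
    {γ : L} (hγint : IsIntegral K γ) (hγ : γ ≠ 0)
    (h : ∀ σ : Gal(L/K), σ γ = algebraMap K L (ψ (φ σ)) * γ) : Continuous φ := by
  have : FiniteDimensional K K⟮γ⟯ := IntermediateField.adjoin.finiteDimensional hγint
  refine φ.continuous_of_le_ker (IntermediateField.fixingSubgroup_isOpen K⟮γ⟯) fun σ hσ => ?_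
  have hσγ : σ γ = γ := (IntermediateField.mem_fixingSubgroup_iff _ _).mp hσ γ
    (IntermediateField.mem_adjoin_simple_self K γ)
  rw [h σ, mul_eq_right₀ hγ] at hσγ
  exact hψ (Units.ext ((algebraMap K L).injective (by simpa using hσγ)))

theorem exists_character_of_fixed_pow {ζ : K} {N : ℕ} [NeZero N] (hζ : IsPrimitiveRoot ζ N)
    {γ : L} (hγ : γ ≠ 0) (hfix : ∀ σ : Gal(L/K), σ (γ ^ N) = γ ^ N) :
    ∃ g : Gal(L/K) →* Multiplicative (ZMod N),
      ∀ σ, σ γ = algebraMap K L (hζ.zmodPowHom (g σ)) * γ := by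
  have hunique (σ : Gal(L/K)) :
      ∃! k : Multiplicative (ZMod N), σ γ = algebraMap K L (hζ.zmodPowHom k) * γ := by
    have hpow : (σ γ / γ) ^ N = 1 := by
      rw [div_pow, ← map_pow, hfix, div_self (pow_ne_zero N hγ)]
    obtain ⟨i, -, hi⟩ :=
      (hζ.map_of_injective (algebraMap K L).injective).eq_pow_of_pow_eq_one hpow
    refine ⟨ofAdd (i : ZMod N), ?_, fun k hk => hζ.zmodPowHom_injective (Units.ext ?_)⟩
    · beta_reduce
      rw [hζ.zmodPowHom_ofAdd_natCast, map_pow, hi, div_mul_cancel₀ _ hγ]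
    · apply (algebraMap K L).injective
      rw [← mul_left_inj' hγ, ← hk, hζ.zmodPowHom_ofAdd_natCast, map_pow, hi,
        div_mul_cancel₀ _ hγ]
  choose g hg hg_unique using hunique
  refine ⟨MonoidHom.mk' g fun σ τ => (hg_unique (σ * τ) _ ?_).symm, hg⟩
  calc (σ * τ) γ = σ (algebraMap K L (hζ.zmodPowHom (g τ)) * γ) := congrArg σ (hg τ)
    _ = algebraMap K L (hζ.zmodPowHom (g τ)) *
        (algebraMap K L (hζ.zmodPowHom (g σ)) * γ) := by
      rw [map_mul, AlgEquiv.commutes, ← hg σ]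
    _ = algebraMap K L (hζ.zmodPowHom (g σ * g τ)) * γ := by
      rw [map_mul, Units.val_mul, map_mul, mul_left_comm, mul_assoc]

theorem exists_continuous_lift_zmod_mul [IsSepClosed L] [IsGalois K L] {m n : ℕ} [NeZero m]
    [NeZero n] {ζ : K} (hζ : IsPrimitiveRoot ζ (m * n))
    (f : Gal(L/K) →* Multiplicative (ZMod m)) (hf : Continuous f) :
    ∃ g : Gal(L/K) →* Multiplicative (ZMod (m * n)), Continuous g ∧
      ∀ σ, f σ = ofAdd (ZMod.castHom (dvd_mul_right m n) (ZMod m) (toAdd (g σ))) := by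
  have hω : IsPrimitiveRoot (ζ ^ n) m := hζ.pow (NeZero.pos _) (mul_comm m n)
  obtain ⟨β, hβ0, hβ⟩ := exists_eigenvector_of_isOpen_ker (hω.zmodPowHom.comp f) (by
    rw [MonoidHom.coe_ker, MonoidHom.coe_comp, Set.preimage_comp]
    exact (isOpen_discrete _).preimage hf)
  simp only [MonoidHom.comp_apply] at hβ
  have := (hζ.map_of_injective (algebraMap K L).injective).neZero'
  have : NeZero (n : L) := ⟨fun h => NeZero.ne ((m * n : ℕ) : L) (by push_cast [h]; ring)⟩
  obtain ⟨γ, rfl⟩ := IsSepClosed.exists_pow_nat_eq β n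
  have hγ0 : γ ≠ 0 := by
    rintro rfl
    exact hβ0 (zero_pow (NeZero.ne n))
  have hfix (σ : Gal(L/K)) : σ (γ ^ (m * n)) = γ ^ (m * n) := by
    rw [mul_comm, pow_mul, map_pow, hβ, mul_pow, ← map_pow, ← Units.val_pow_eq_pow_val,
      (mem_rootsOfUnity _ _).mp (hω.zmodPowHom_mem_rootsOfUnity _), Units.val_one, map_one,
      one_mul]
  obtain ⟨g, hg⟩ := exists_character_of_fixed_pow hζ hγ0 hfix
  refine ⟨g, continuous_of_apply_eq_algebraMap_mul _ hζ.zmodPowHom_injective g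
    (Algebra.IsIntegral.isIntegral γ) hγ0 hg, fun σ => hω.zmodPowHom_injective (Units.ext ?_)⟩
  apply (algebraMap K L).injective
  rw [← mul_left_inj' (pow_ne_zero n hγ0)]
  calc _ = σ (γ ^ n) := (hβ σ).symm
    _ = _ := by rw [map_pow, hg σ, mul_pow, ← map_pow, ← hζ.zmodPowHom_castHom hω]

end

/-- Kummer-theoretic lifting: let `m, n ≥ 1` and let `F` be a field containing a primitive
root of unity of order `mn`.  Then for every field extension `K/F`, every continuous
homomorphism from the absolute Galois group `Γ_K` to `ℤ/mℤ` lifts, through the reduction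
map `ℤ/mnℤ → ℤ/mℤ`, to a continuous homomorphism `Γ_K → ℤ/mnℤ`. -/
theorem lift_mod_m_to_mod_mn (m n : ℕ) (hm : 1 ≤ m) (hn : 1 ≤ n)
    (F K : Type) [Field F] [Field K] [Algebra F K]
    (ζ : F) (hζ : IsPrimitiveRoot ζ (m * n)) :
    ∀ f : ((separableClosure K (AlgebraicClosure K)) ≃ₐ[K]
            (separableClosure K (AlgebraicClosure K))) →* Multiplicative (ZMod m),
      Continuous f →
      ∃ g : ((separableClosure K (AlgebraicClosure K)) ≃ₐ[K]
              (separableClosure K (AlgebraicClosure K))) →* Multiplicative (ZMod (m * n)),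
        Continuous g ∧
        ∀ x, f x = Multiplicative.ofAdd
          ((ZMod.castHom (dvd_mul_right m n) (ZMod m)) (Multiplicative.toAdd (g x))) := by
  have : NeZero m := ⟨by omega⟩
  have : NeZero n := ⟨by omega⟩
  exact exists_continuous_lift_zmod_mul (hζ.map_of_injective (algebraMap F K).injective)
end

section
/- Let H be a finite group, B a finite H-module, M a free abelian group with an H-action admitting a basis permuted by H, and let x be a basis element with stabilizer H_x ⊆ H. Then an element of the H-submodule B ⊗ (⊕_{i} ℤ·h_i(x)) (where h_i range over coset representatives of H/H_x) is H-invariant if and only if it equals N_{H/H_x}(b ⊗ x) := Σ_i h_i(b) ⊗ h_i(x) for some b ∈ B^{H_x}. -/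
/-!
An invariant `f` supported on the orbit of `x` is determined by `f x` through
`f (h • x) = h • f x`, and invariance under `H_x` forces `f x ∈ B^{H_x}`. Conversely, for
`b ∈ B^{H_x}` the relative norm takes the value `h • b` at `h • x`, independently of the coset
representative, so it satisfies the same relation and is invariant.
-/

open MulAction

theorem smul_eq_smul_of_mk_eq {G β : Type*} [Group G] [MulAction G β] {K : Subgroup G} {b : β}
    (hb : ∀ k ∈ K, k • b = b) {g g' : G} (h : (g : G ⧸ K) = g') : g • b = g' • b := by
  rw [← mul_inv_cancel_left g g', mul_smul, hb _ (QuotientGroup.eq.mp h)]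

theorem MulAction.smul_mem_orbit_iff {G α : Type*} [Group G] [MulAction G α] (g : G) {a b : α} :
    g • a ∈ orbit G b ↔ a ∈ orbit G b := by
  rw [← orbit_eq_iff, orbit_smul, orbit_eq_iff]

section OrbitSupported

variable {H : Type*} [Group H] {B : Type*} {ι : Type*} [MulAction H ι] {x : ι}

theorem Finsupp.eq_of_apply_smul_eq [Zero B] {f g : ι →₀ B} (hf : ∀ i, f i ≠ 0 → i ∈ orbit H x)
    (hg : ∀ i, g i ≠ 0 → i ∈ orbit H x) (hfg : ∀ h : H, f (h • x) = g (h • x)) : f = g := by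
  ext i
  by_cases hi : i ∈ orbit H x
  · obtain ⟨h, rfl⟩ := hi
    exact hfg h
  · rw [not_imp_comm.mp (hf i) hi, not_imp_comm.mp (hg i) hi]

theorem Finsupp.invariant_iff_apply_smul [AddMonoid B] [DistribMulAction H B] {f : ι →₀ B}
    (hf : ∀ i, f i ≠ 0 → i ∈ orbit H x) :
    (∀ (h : H) (i : ι), h • f (h⁻¹ • i) = f i) ↔ ∀ h : H, f (h • x) = h • f x := by
  refine ⟨fun hinv h => by simpa using (hinv h (h • x)).symm, fun happ h i => ?_⟩
  by_cases hi : i ∈ orbit H x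
  · obtain ⟨g, rfl⟩ := hi
    rw [smul_smul, happ, happ, smul_smul, mul_inv_cancel_left]
  · have hi' : h⁻¹ • i ∉ orbit H x := (smul_mem_orbit_iff _).not.mpr hi
    rw [not_imp_comm.mp (hf _) hi', not_imp_comm.mp (hf i) hi, smul_zero]

end OrbitSupported

section RelNorm

variable {H : Type*} [Group H] {B : Type*} [AddCommMonoid B] [DistribMulAction H B]
  {ι : Type*} [MulAction H ι] {x : ι} (rep : H ⧸ stabilizer H x → H)

/-- The relative norm `N_{H/H_x}(b ⊗ x)`, an element of `B ⊗ ℤ[ι]` written as `ι →₀ B`. -/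
noncomputable def relNorm (b : B) : ι →₀ B :=
  ∑ᶠ c : H ⧸ stabilizer H x, Finsupp.single (rep c • x) (rep c • b)

theorem relNorm_apply [Fintype (H ⧸ stabilizer H x)] (b : B) (i : ι) :
    relNorm rep b i = ∑ c, Finsupp.single (rep c • x) (rep c • b) i := by
  rw [relNorm, finsum_eq_sum_of_fintype, Finsupp.finsetSum_apply]

variable [Finite (H ⧸ stabilizer H x)]

theorem relNorm_apply_smul (hrep : ∀ c, (rep c : H ⧸ stabilizer H x) = c) {b : B}
    (hb : ∀ h ∈ stabilizer H x, h • b = b) (h : H) : relNorm rep b (h • x) = h • b := by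
  have := Fintype.ofFinite (H ⧸ stabilizer H x)
  have hrep_smul : ∀ c, rep c • x = ofQuotientStabilizer H x c := fun c => by
    rw [← ofQuotientStabilizer_mk, hrep]
  rw [relNorm_apply, Finset.sum_eq_single_of_mem (h : H ⧸ stabilizer H x) (Finset.mem_univ _),
    hrep_smul, ofQuotientStabilizer_mk, Finsupp.single_eq_same, smul_eq_smul_of_mk_eq hb (hrep _)]
  intro c _ hc
  refine Finsupp.single_eq_of_ne fun hcx => hc (injective_ofQuotientStabilizer H x ?_)
  rw [← hrep_smul, ← hcx, ofQuotientStabilizer_mk]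

theorem relNorm_apply_self (hrep : ∀ c, (rep c : H ⧸ stabilizer H x) = c) {b : B}
    (hb : ∀ h ∈ stabilizer H x, h • b = b) : relNorm rep b x = b := by
  simpa using relNorm_apply_smul rep hrep hb 1

theorem mem_orbit_of_relNorm_apply_ne_zero (b : B) (i : ι) :
    relNorm rep b i ≠ 0 → i ∈ orbit H x := by
  have := Fintype.ofFinite (H ⧸ stabilizer H x)
  rw [relNorm_apply]
  intro hi
  obtain ⟨c, -, hc⟩ := Finset.exists_ne_zero_of_sum_ne_zero hi
  exact ⟨rep c, (Finsupp.single_apply_ne_zero.mp hc).1.symm⟩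

end RelNorm

theorem invariant_iff_norm_general (H : Type) [Group H] [Finite H]
    (B : Type) [AddCommGroup B] [DistribMulAction H B]
    (ι : Type) [MulAction H ι] (x : ι)
    (rep : H ⧸ MulAction.stabilizer H x → H)
    (hrep : ∀ c, (QuotientGroup.mk (rep c) : H ⧸ MulAction.stabilizer H x) = c)
    (f : ι →₀ B) (hsupp : ∀ i, f i ≠ 0 → i ∈ MulAction.orbit H x) :
    (∀ (h : H) (i : ι), h • f (h⁻¹ • i) = f i) ↔
      ∃ b : B, (∀ h ∈ MulAction.stabilizer H x, h • b = b) ∧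
        f = ∑ᶠ c : H ⧸ MulAction.stabilizer H x,
              Finsupp.single (rep c • x) (rep c • b) := by
  change _ ↔ ∃ b : B, _ ∧ f = relNorm rep b
  rw [Finsupp.invariant_iff_apply_smul hsupp]
  constructor
  · intro hf
    have hfx : ∀ h ∈ stabilizer H x, h • f x = f x := fun h hh => by
      rw [← hf, show h • x = x from hh]
    refine ⟨f x, hfx, Finsupp.eq_of_apply_smul_eq hsupp
      (mem_orbit_of_relNorm_apply_ne_zero rep _) fun h => ?_⟩
    rw [hf, relNorm_apply_smul rep hrep hfx]
  · rintro ⟨b, hb, rfl⟩ h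
    rw [relNorm_apply_smul rep hrep hb, relNorm_apply_self rep hrep hb]

/-- Let `H` be a finite group, `B` a finite `H`-module, and let `H` permute a basis of a
free abelian group; let `x` be a basis element with stabilizer `H_x`.  Modelling the span
of the orbit of `x` inside `B ⊗ M` by finitely supported functions supported on the orbit
of `x`, an element of this submodule is `H`-invariant if and only if it is the relative
norm `N_{H/H_x}(b ⊗ x) = Σᵢ hᵢ(b) ⊗ hᵢ(x)` of some `b ∈ B^{H_x}`, where the `hᵢ` are
coset representatives of `H/H_x`. -/
theorem invariant_iff_norm (H : Type) [Group H] [Finite H]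
    (B : Type) [AddCommGroup B] [Finite B] [DistribMulAction H B]
    (ι : Type) [MulAction H ι] (x : ι)
    (rep : H ⧸ MulAction.stabilizer H x → H)
    (hrep : ∀ c, (QuotientGroup.mk (rep c) : H ⧸ MulAction.stabilizer H x) = c)
    (f : ι →₀ B) (hsupp : ∀ i, f i ≠ 0 → i ∈ MulAction.orbit H x) :
    (∀ (h : H) (i : ι), h • f (h⁻¹ • i) = f i) ↔
      ∃ b : B, (∀ h ∈ MulAction.stabilizer H x, h • b = b) ∧
        f = ∑ᶠ c : H ⧸ MulAction.stabilizer H x,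
              Finsupp.single (rep c • x) (rep c • b) :=
  invariant_iff_norm_general H B ι x rep hrep f hsupp
end
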